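/- Let n ∈ (2,3), p > n and C_osc ≥ 1. There exists a constant c_p > 0, depending only on n, p and C_osc (in particular independent of h, N and u), such that for every L > 0, every positive integer N with h = L/N, and every N-periodic sequence u with u_i > 0 satisfying the oscillation condition u_i ≤ C_osc u_{i+1} and u_i ≤ C_osc u_{i−1} for all i, one has A_Δ^h(u, −u^{−p−1}) ≥ c_p (n−2) h Σ_i u_i^{n−p−4} d_i², where A_Δ^h(u, −u^{−p−1}) denotes A_Δ^h(u, v) with v_i = −u_i^{−p−1}. -/

import Mathlib

open Finset

/-- Forward difference quotient `d_i = (u_{i+1} - u_i)/h`. -/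
noncomputable def dq (h : ℝ) (u : ℤ → ℝ) (i : ℤ) : ℝ := (u (i + 1) - u i) / h

/-- The discrete operator `A_Δ^h(u,v)`. -/
noncomputable def Adelta (n h : ℝ) (N : ℕ) (u v : ℤ → ℝ) : ℝ :=
  -((n - 2) / 6) * h * (∑ i ∈ Icc (1 : ℤ) (N : ℤ),
      u i ^ (n - 3) * ((dq h u (i - 1)) ^ 2 + (dq h u i) ^ 2) * v i)
  - (n - 2) / 6 * h * (∑ i ∈ Icc (1 : ℤ) (N : ℤ),
      ((u i ^ (n - 3) + u (i + 1) ^ (n - 3)) * dq h u i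
        + (u (i - 1) ^ (n - 3) + u i ^ (n - 3)) * dq h u (i - 1))
      * ((u (i + 1) - u (i - 1)) / (2 * h)) * v i)

open Real in
lemma alg (q c0 x y : ℝ) (hq : 2 ≤ q) (hc0 : 0 < c0) (hc1 : c0 ≤ 1)
    (hx : c0 ≤ x) (hy : c0 ≤ y) :
    (2+x+y)^2 + min 5 (9 * c0 ^ q) ≤
      (3+x+3*x^q+x^(q-1)) * (3+y+3*y^q+y^(q-1)) := by
  have hx0 : 0 < x := lt_of_lt_of_le hc0 hx
  have hy0 : 0 < y := lt_of_lt_of_le hc0 hy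
  have hxq : (0:ℝ) < x ^ q := Real.rpow_pos_of_pos hx0 q
  have hyq : (0:ℝ) < y ^ q := Real.rpow_pos_of_pos hy0 q
  have hxq1 : (0:ℝ) ≤ x ^ (q-1) := Real.rpow_nonneg hx0.le _
  have hyq1 : (0:ℝ) ≤ y ^ (q-1) := Real.rpow_nonneg hy0.le _
  rcases le_total x 1 with hx1 | hx1 <;> rcases le_total y 1 with hy1 | hy1
  · -- both ≤ 1
    have hcx : c0 ^ q ≤ x ^ q := Real.rpow_le_rpow hc0.le hx (by linarith)
    have hcy : c0 ^ q ≤ y ^ q := Real.rpow_le_rpow hc0.le hy (by linarith)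
    have hm : min 5 (9 * c0 ^ q) ≤ 9 * x ^ q := le_trans (min_le_right _ _) (by linarith)
    nlinarith [mul_nonneg hx0.le hy0.le, mul_nonneg (mul_nonneg hxq.le hy0.le) (sub_nonneg.2 hy1),
      mul_pos hxq hyq, mul_nonneg hxq1 hyq1, mul_nonneg hxq1 hy0.le, mul_nonneg hx0.le hyq1,
      mul_nonneg (sub_nonneg.2 hx1) (sub_nonneg.2 hy1), mul_nonneg hx0.le (sub_nonneg.2 hx1),
      mul_nonneg hy0.le (sub_nonneg.2 hy1), mul_pos hxq hy0, mul_pos hx0 hyq]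
  · -- x ≤ 1 ≤ y
    have hy2 : y^(2:ℝ) ≤ y ^ q := Real.rpow_le_rpow_of_exponent_le hy1 hq
    have hy2' : y^(2:ℝ) = y^(2:ℕ) := by rw [← Real.rpow_natCast y 2]; norm_num
    rw [hy2'] at hy2
    have hm : min 5 (9 * c0 ^ q) ≤ 5 := min_le_left _ _
    nlinarith [mul_pos hxq hyq, mul_nonneg hxq1 hyq1, mul_nonneg hxq1 hy0.le,
      mul_nonneg hx0.le hyq1, mul_pos hxq hy0, mul_pos hx0 hyq,
      mul_nonneg hx0.le (sub_nonneg.2 hx1), mul_nonneg (sub_nonneg.2 hy1) (sub_nonneg.2 hy1),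
      mul_nonneg hx0.le hy0.le, sq_nonneg (y-1), mul_nonneg hx0.le (sq_nonneg (y-1))]
  · -- y ≤ 1 ≤ x
    have hx2 : x^(2:ℝ) ≤ x ^ q := Real.rpow_le_rpow_of_exponent_le hx1 hq
    have hx2' : x^(2:ℝ) = x^(2:ℕ) := by rw [← Real.rpow_natCast x 2]; norm_num
    rw [hx2'] at hx2
    have hm : min 5 (9 * c0 ^ q) ≤ 5 := min_le_left _ _
    nlinarith [mul_pos hxq hyq, mul_nonneg hxq1 hyq1, mul_nonneg hyq1 hx0.le,
      mul_nonneg hy0.le hxq1, mul_pos hyq hx0, mul_pos hy0 hxq,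
      mul_nonneg hy0.le (sub_nonneg.2 hy1), mul_nonneg hy0.le hx0.le,
      sq_nonneg (x-1), mul_nonneg hy0.le (sq_nonneg (x-1))]
  · -- both ≥ 1
    have hx2 : x^(2:ℝ) ≤ x ^ q := Real.rpow_le_rpow_of_exponent_le hx1 hq
    have hx2' : x^(2:ℝ) = x^(2:ℕ) := by rw [← Real.rpow_natCast x 2]; norm_num
    rw [hx2'] at hx2
    have hy2 : y^(2:ℝ) ≤ y ^ q := Real.rpow_le_rpow_of_exponent_le hy1 hq
    have hy2' : y^(2:ℝ) = y^(2:ℕ) := by rw [← Real.rpow_natCast y 2]; norm_num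
    rw [hy2'] at hy2
    have hm : min 5 (9 * c0 ^ q) ≤ 5 := min_le_left _ _
    nlinarith [mul_pos hxq hyq, mul_nonneg hxq1 hyq1, mul_le_mul hx2 hy2 (by positivity) hxq.le,
      mul_nonneg hx0.le hy0.le, mul_pos hx0 hyq, mul_pos hxq hy0,
      mul_nonneg (sub_nonneg.2 hx1) (sub_nonneg.2 hy1),
      mul_le_mul_of_nonneg_right hx2 hy0.le, mul_le_mul_of_nonneg_left hy2 hx0.le]

noncomputable def epsQ (n p C : ℝ) : ℝ := min 5 (9 * (C⁻¹) ^ ((p+4-n)/(3-n)))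
noncomputable def MQ (C : ℝ) : ℝ := (2+2*C)^2
noncomputable def thQ (n p C : ℝ) : ℝ := Real.sqrt (MQ C / (4*(MQ C + epsQ n p C)))

lemma epsQ_pos (n p C : ℝ) (hC : 1 ≤ C) : 0 < epsQ n p C := by
  have : (0:ℝ) < (C⁻¹) ^ ((p+4-n)/(3-n)) :=
    Real.rpow_pos_of_pos (by positivity) _
  simp only [epsQ, lt_min_iff]
  constructor <;> nlinarith

lemma MQ_pos (C : ℝ) (hC : 1 ≤ C) : 0 < MQ C := by simp only [MQ]; nlinarith

lemma thQ_pos (n p C : ℝ) (hC : 1 ≤ C) : 0 < thQ n p C := by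
  apply Real.sqrt_pos.2
  have h1 := epsQ_pos n p C hC
  have h2 := MQ_pos C hC
  positivity

lemma thQ_sq (n p C : ℝ) (hC : 1 ≤ C) :
    (thQ n p C)^2 = MQ C / (4*(MQ C + epsQ n p C)) := by
  have h1 := epsQ_pos n p C hC
  have h2 := MQ_pos C hC
  rw [thQ, Real.sq_sqrt (by positivity)]

lemma thQ_lt_half (n p C : ℝ) (hC : 1 ≤ C) : thQ n p C < 1/2 := by
  have h1 := epsQ_pos n p C hC
  have h2 := MQ_pos C hC
  have : MQ C / (4*(MQ C + epsQ n p C)) < (1/2)^2 := by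
    rw [div_lt_iff₀ (by positivity)]; nlinarith
  calc thQ n p C = Real.sqrt (MQ C / (4*(MQ C + epsQ n p C))) := rfl
    _ < 1/2 := by
        rw [show (1:ℝ)/2 = Real.sqrt ((1/2)^2) by rw [Real.sqrt_sq]; norm_num]
        exact Real.sqrt_lt_sqrt (by positivity) this

lemma cross (θ a b X d e : ℝ) (hθ : 0 < θ) (ha : 0 < a) (hb : 0 < b) (hX : 0 ≤ X)
    (h : X^2 ≤ 4*θ^2*a*b) : -(θ*(a*d^2 + b*e^2)) ≤ X*(d*e) := by
  nlinarith [sq_nonneg (2*θ*a*d + X*e), mul_nonneg (sub_nonneg.2 h) (sq_nonneg e),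
    mul_pos hθ ha, sq_nonneg e, sq_nonneg d]

lemma sum_shift (G : ℤ → ℝ) (N : ℕ) (hN : 0 < N) (hG : ∀ i : ℤ, G (i + N) = G i) :
    ∑ i ∈ Icc (1:ℤ) (N:ℤ), G (i+1) = ∑ i ∈ Icc (1:ℤ) (N:ℤ), G i := by
  have hN1 : (1:ℤ) ≤ (N:ℤ) := by exact_mod_cast hN
  have h1 : ∑ i ∈ Icc (1:ℤ) (N:ℤ), G (i+1) = ∑ j ∈ Icc (2:ℤ) ((N:ℤ)+1), G j := by
    rw [show Icc (2:ℤ) ((N:ℤ)+1) = Finset.map (addRightEmbedding (1:ℤ)) (Icc (1:ℤ) (N:ℤ)) by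
      rw [Finset.map_add_right_Icc]; norm_num, Finset.sum_map]
    rfl
  have e2 : Icc (2:ℤ) ((N:ℤ)+1) = insert ((N:ℤ)+1) (Icc 2 (N:ℤ)) := by
    ext x; simp only [Finset.mem_Icc, Finset.mem_insert]; omega
  have e1 : Icc (1:ℤ) (N:ℤ) = insert (1:ℤ) (Icc 2 (N:ℤ)) := by
    ext x; simp only [Finset.mem_Icc, Finset.mem_insert]; omega
  have n1 : ((N:ℤ)+1) ∉ Icc (2:ℤ) (N:ℤ) := by simp
  have n2 : (1:ℤ) ∉ Icc (2:ℤ) (N:ℤ) := by simp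
  have hGN : G ((N:ℤ)+1) = G 1 := by
    have := hG 1; rwa [show (1:ℤ) + (N:ℤ) = (N:ℤ)+1 by ring] at this
  rw [h1, e2, Finset.sum_insert n1, hGN]
  rw [e1, Finset.sum_insert n2]

open Real in
set_option maxHeartbeats 1000000 in
lemma key (n p C : ℝ) (hn2 : 2 < n) (hn3 : n < 3) (hp : n < p) (hC : 1 ≤ C)
    (v0 v1 v2 : ℝ) (h0 : 0 < v0) (h1 : 0 < v1) (h2 : 0 < v2)
    (h10 : v1 ≤ C*v0) (h01 : v0 ≤ C*v1) (h12 : v1 ≤ C*v2) (h21 : v2 ≤ C*v1) :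
    ((v1^(n-3) + (v2^(n-3)+v0^(n-3))/2) * v1^(-p-1))^2 ≤
      4 * (thQ n p C)^2 *
        ((3*v1^(n-3)+v2^(n-3))/2 * v1^(-p-1) + (3*v2^(n-3)+v1^(n-3))/2 * v2^(-p-1)) *
        ((3*v0^(n-3)+v1^(n-3))/2 * v0^(-p-1) + (3*v1^(n-3)+v0^(n-3))/2 * v1^(-p-1)) := by
  have hC0 : (0:ℝ) < C := by linarith
  have hσ : (0:ℝ) < 3 - n := by linarith
  set q : ℝ := (p+4-n)/(3-n) with hqdef
  have hq2 : 2 ≤ q := by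
    rw [hqdef, le_div_iff₀ hσ]; linarith
  -- ratios
  set r : ℝ := v2/v1 with hrdef
  set s : ℝ := v1/v0 with hsdef
  have hr0 : 0 < r := div_pos h2 h1
  have hs0 : 0 < s := div_pos h1 h0
  have hrC : r ≤ C := by rw [hrdef, div_le_iff₀ h1]; linarith
  have hsC : s ≤ C := by rw [hsdef, div_le_iff₀ h0]; linarith
  have hrc : C⁻¹ ≤ r := by
    rw [hrdef, le_div_iff₀ h1, inv_mul_le_iff₀ hC0]; linarith
  have hsc : C⁻¹ ≤ s := by
    rw [hsdef, le_div_iff₀ h0, inv_mul_le_iff₀ hC0]; linarith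
  set x : ℝ := r ^ (n-3) with hxdef
  set y : ℝ := s ^ (3-n) with hydef
  have hx0 : 0 < x := Real.rpow_pos_of_pos hr0 _
  have hy0 : 0 < y := Real.rpow_pos_of_pos hs0 _
  -- identities
  have hv2 : v2 = v1 * r := by rw [hrdef]; field_simp
  have hv0 : v0 = v1 * s⁻¹ := by rw [hsdef]; field_simp
  have hα2 : v2^(n-3) = v1^(n-3) * x := by
    rw [hv2, Real.mul_rpow h1.le hr0.le]
  have hinv : (s⁻¹ : ℝ)^(n-3) = s^(3-n) := by
    rw [Real.inv_rpow hs0.le, ← Real.rpow_neg hs0.le]; ring_nf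
  have hα0 : v0^(n-3) = v1^(n-3) * y := by
    rw [hv0, Real.mul_rpow h1.le (by positivity), hinv, hydef]
  -- weight identities
  have hrx : r^(-p-1) = x^(q-1) := by
    rw [hxdef, ← Real.rpow_mul hr0.le]
    congr 1
    rw [hqdef]
    field_simp
    ring
  have hsy : s^(p+1) = y^(q-1) := by
    rw [hydef, ← Real.rpow_mul hs0.le]
    congr 1
    rw [hqdef]
    field_simp
    ring
  have hw2 : v2^(-p-1) = v1^(-p-1) * x^(q-1) := by
    rw [hv2, Real.mul_rpow h1.le hr0.le, hrx]
  have hinv2 : (s⁻¹ : ℝ)^(-p-1) = s^(p+1) := by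
    rw [Real.inv_rpow hs0.le, ← Real.rpow_neg hs0.le]; ring_nf
  have hw0 : v0^(-p-1) = v1^(-p-1) * y^(q-1) := by
    rw [hv0, Real.mul_rpow h1.le (by positivity), hinv2, hsy]
  have hxq : x^q = x * x^(q-1) := by
    rw [← Real.rpow_one_add' (by positivity) (by intro hc; linarith)]
    ring_nf
  have hyq : y^q = y * y^(q-1) := by
    rw [← Real.rpow_one_add' (by positivity) (by intro hc; linarith)]
    ring_nf
  -- bounds on x and y
  have hσ1 : 3 - n ≤ 1 := by linarith
  have hCσ : C^(3-n) ≤ C := by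
    calc C^(3-n) ≤ C^(1:ℝ) := Real.rpow_le_rpow_of_exponent_le hC hσ1
      _ = C := Real.rpow_one C
  have hCσ0 : (0:ℝ) < C^(3-n) := Real.rpow_pos_of_pos hC0 _
  have hxinv : x = (r^(3-n))⁻¹ := by
    rw [hxdef, show n-3 = -(3-n) by ring, Real.rpow_neg hr0.le]
  have hrσ0 : (0:ℝ) < r^(3-n) := Real.rpow_pos_of_pos hr0 _
  have hrσ_ub : r^(3-n) ≤ C^(3-n) := Real.rpow_le_rpow hr0.le hrC (by linarith)
  have hrσ_lb : (C^(3-n))⁻¹ ≤ r^(3-n) := by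
    rw [← Real.inv_rpow hC0.le]
    exact Real.rpow_le_rpow (by positivity) hrc (by linarith)
  have hx_ub : x ≤ C := by
    rw [hxinv]
    calc (r^(3-n))⁻¹ ≤ ((C^(3-n))⁻¹)⁻¹ := by
          apply inv_anti₀ (by positivity) hrσ_lb
      _ = C^(3-n) := inv_inv _
      _ ≤ C := hCσ
  have hx_lb : C⁻¹ ≤ x := by
    rw [hxinv]
    apply inv_anti₀ hrσ0 (le_trans hrσ_ub hCσ)
  have hy_ub : y ≤ C := by
    rw [hydef]
    calc s^(3-n) ≤ C^(3-n) := Real.rpow_le_rpow hs0.le hsC (by linarith)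
      _ ≤ C := hCσ
  have hy_lb : C⁻¹ ≤ y := by
    rw [hydef]
    calc C⁻¹ ≤ (C^(3-n))⁻¹ := inv_anti₀ hCσ0 hCσ
      _ = (C⁻¹)^(3-n) := (Real.inv_rpow hC0.le _).symm
      _ ≤ s^(3-n) := Real.rpow_le_rpow (by positivity) hsc (by linarith)
  -- package
  set W : ℝ := v1^(n-3) * v1^(-p-1) with hWdef
  have hW0 : 0 < W := by
    rw [hWdef]; exact mul_pos (Real.rpow_pos_of_pos h1 _) (Real.rpow_pos_of_pos h1 _)
  have hL : (v1^(n-3) + (v2^(n-3)+v0^(n-3))/2) * v1^(-p-1) = W*(2+x+y)/2 := by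
    rw [hα2, hα0, hWdef]; ring
  have hP : (3*v1^(n-3)+v2^(n-3))/2 * v1^(-p-1) + (3*v2^(n-3)+v1^(n-3))/2 * v2^(-p-1)
      = W*(3+x+3*x^q+x^(q-1))/2 := by
    rw [hα2, hw2, hxq, hWdef]; ring
  have hP' : (3*v0^(n-3)+v1^(n-3))/2 * v0^(-p-1) + (3*v1^(n-3)+v0^(n-3))/2 * v1^(-p-1)
      = W*(3+y+3*y^q+y^(q-1))/2 := by
    rw [hα0, hw0, hyq, hWdef]; ring
  -- scalar inequality
  have heps : epsQ n p C = min 5 (9 * (C⁻¹) ^ q) := by rw [epsQ, ← hqdef]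
  have halg := alg q C⁻¹ x y hq2 (by positivity) (inv_le_one_of_one_le₀ hC) hx_lb hy_lb
  rw [← heps] at halg
  have hM : (2+x+y)^2 ≤ MQ C := by
    rw [MQ]
    apply pow_le_pow_left₀ (by linarith) (by linarith)
  have hepos := epsQ_pos n p C hC
  have hMpos := MQ_pos C hC
  have hprod : (MQ C + epsQ n p C) * (2+x+y)^2
      ≤ MQ C * ((3+x+3*x^q+x^(q-1)) * (3+y+3*y^q+y^(q-1))) := by
    have k1 : 0 ≤ epsQ n p C * (MQ C - (2+x+y)^2) := mul_nonneg hepos.le (by linarith)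
    have k2 : 0 ≤ MQ C * ((3+x+3*x^q+x^(q-1)) * (3+y+3*y^q+y^(q-1))
        - ((2+x+y)^2 + epsQ n p C)) := mul_nonneg hMpos.le (by linarith)
    linarith [k1, k2]
  have hfinal : (2+x+y)^2
      ≤ 4*(thQ n p C)^2 * ((3+x+3*x^q+x^(q-1)) * (3+y+3*y^q+y^(q-1))) := by
    rw [thQ_sq n p C hC, show 4*(MQ C / (4*(MQ C + epsQ n p C))) = MQ C/(MQ C + epsQ n p C) by
      field_simp]
    rw [div_mul_eq_mul_div, le_div_iff₀ (by positivity)]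
    linarith [hprod]
  rw [hL, hP, hP']
  calc (W*(2+x+y)/2)^2 = (2+x+y)^2 * (W^2/4) := by ring
    _ ≤ (4*(thQ n p C)^2 * ((3+x+3*x^q+x^(q-1)) * (3+y+3*y^q+y^(q-1)))) * (W^2/4) :=
        mul_le_mul_of_nonneg_right hfinal (by positivity)
    _ = 4*(thQ n p C)^2 * (W*(3+x+3*x^q+x^(q-1))/2) * (W*(3+y+3*y^q+y^(q-1))/2) := by ring


noncomputable def cxf (n p : ℝ) (u : ℤ → ℝ) (i : ℤ) : ℝ :=
  (u i^(n-3) + (u (i+1)^(n-3) + u (i-1)^(n-3))/2) * u i^(-p-1)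

noncomputable def Pf (n p : ℝ) (u : ℤ → ℝ) (i : ℤ) : ℝ :=
  (3*u i^(n-3) + u (i+1)^(n-3))/2 * u i^(-p-1)
    + (3*u (i+1)^(n-3) + u i^(n-3))/2 * u (i+1)^(-p-1)


/-- `A_Δ^h(u, -u^{-p-1}) ≥ c_p (n-2) h Σ_i u_i^{n-p-4} d_i²` under the
oscillation condition, with `c_p = c_p(n, p, C_osc)` independent of `h`, `N`, `u`. -/
theorem statement8 (n p Cosc : ℝ) (hn : n ∈ Set.Ioo (2 : ℝ) 3) (hp : n < p)
    (hCosc : 1 ≤ Cosc) :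
    ∃ cp : ℝ, 0 < cp ∧
      ∀ (L : ℝ) (hL : 0 < L) (N : ℕ) (hN : 0 < N) (h : ℝ) (hh : h = L / N)
        (u : ℤ → ℝ) (hper : ∀ i : ℤ, u (i + (N : ℤ)) = u i) (hpos : ∀ i : ℤ, 0 < u i)
        (hosc : ∀ i : ℤ, u i ≤ Cosc * u (i + 1) ∧ u i ≤ Cosc * u (i - 1)),
        Adelta n h N u (fun i => -(u i ^ (-p - 1))) ≥
          cp * (n - 2) * h *
            ∑ i ∈ Icc (1 : ℤ) (N : ℤ), u i ^ (n - p - 4) * (dq h u i) ^ 2 := by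
  obtain ⟨hn2, hn3⟩ := hn
  set θ : ℝ := thQ n p Cosc with hθdef
  have hθ0 : 0 < θ := thQ_pos n p Cosc hCosc
  have hθh : θ < 1/2 := thQ_lt_half n p Cosc hCosc
  refine ⟨(1 - 2*θ)/4, by linarith, ?_⟩
  intro L hL N hN h hh u hper hpos hosc
  have hNZ : (0:ℝ) < (N:ℝ) := by exact_mod_cast hN
  have hh0 : 0 < h := by rw [hh]; positivity
  have hne : h ≠ 0 := ne_of_gt hh0
  -- abbreviations
  set d : ℤ → ℝ := dq h u with hddef
  set w : ℤ → ℝ := fun i => u i ^ (-p-1) with hwdef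
  set α : ℤ → ℝ := fun i => u i ^ (n-3) with hαdef
  -- difference quotient splitting
  have hsplit : ∀ i : ℤ, (u (i+1) - u (i-1))/(2*h) = (d i + d (i-1))/2 := by
    intro i
    rw [hddef]
    unfold dq
    rw [show i - 1 + 1 = i by ring, ← add_div, div_div]
    rw [show h*2 = 2*h by ring]
    congr 1
    ring
  -- step 1: rewrite Adelta
  have hA : Adelta n h N u (fun i => -(u i ^ (-p - 1))) =
      (n-2)/6 * h * ∑ i ∈ Icc (1:ℤ) (N:ℤ),
        ((3*α i + α (i+1))/2 * w i * (d i)^2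
          + (3*α i + α (i-1))/2 * w i * (d (i-1))^2
          + cxf n p u i * (d i * d (i-1))) := by
    unfold Adelta
    have e1 : ∑ i ∈ Icc (1:ℤ) (N:ℤ),
        u i ^ (n - 3) * ((dq h u (i - 1)) ^ 2 + (dq h u i) ^ 2) * (fun i => -(u i ^ (-p - 1))) i
        = -∑ i ∈ Icc (1:ℤ) (N:ℤ), α i * ((d (i-1))^2 + (d i)^2) * w i := by
      rw [← Finset.sum_neg_distrib]
      exact Finset.sum_congr rfl (fun i _ => by simp only [hαdef, hwdef, hddef]; ring)
    have e2 : ∑ i ∈ Icc (1:ℤ) (N:ℤ),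
        ((u i ^ (n - 3) + u (i + 1) ^ (n - 3)) * dq h u i
          + (u (i - 1) ^ (n - 3) + u i ^ (n - 3)) * dq h u (i - 1))
        * ((u (i + 1) - u (i - 1)) / (2 * h)) * (fun i => -(u i ^ (-p - 1))) i
        = -∑ i ∈ Icc (1:ℤ) (N:ℤ),
            ((α i + α (i+1)) * d i + (α (i-1) + α i) * d (i-1)) * ((d i + d (i-1))/2) * w i := by
      rw [← Finset.sum_neg_distrib]
      refine Finset.sum_congr rfl (fun i _ => ?_)
      rw [hsplit i]
      simp only [hαdef, hwdef, hddef]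
      ring
    rw [e1, e2]
    rw [show -((n - 2) / 6) * h * (-∑ i ∈ Icc (1:ℤ) (N:ℤ), α i * ((d (i-1))^2 + (d i)^2) * w i)
        - (n - 2) / 6 * h * (-∑ i ∈ Icc (1:ℤ) (N:ℤ),
            ((α i + α (i+1)) * d i + (α (i-1) + α i) * d (i-1)) * ((d i + d (i-1))/2) * w i)
        = (n-2)/6 * h * ((∑ i ∈ Icc (1:ℤ) (N:ℤ), α i * ((d (i-1))^2 + (d i)^2) * w i)
          + ∑ i ∈ Icc (1:ℤ) (N:ℤ),
            ((α i + α (i+1)) * d i + (α (i-1) + α i) * d (i-1)) * ((d i + d (i-1))/2) * w i) by ring,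
      ← Finset.sum_add_distrib]
    refine congrArg _ (Finset.sum_congr rfl (fun i _ => ?_))
    simp only [cxf, hαdef, hwdef]
    ring
  -- periodicity helpers
  have hu1 : ∀ j:ℤ, u (j + N + 1) = u (j+1) := fun j => by
    rw [show j+(N:ℤ)+1 = (j+1)+N by ring]; exact hper _
  have hdper : ∀ j:ℤ, d (j + N) = d j := fun j => by
    rw [hddef]; unfold dq; rw [hu1, hper]
  -- shift for the b-term
  have hbshift : ∑ i ∈ Icc (1:ℤ) (N:ℤ), (3*α i + α (i-1))/2 * w i * (d (i-1))^2
      = ∑ i ∈ Icc (1:ℤ) (N:ℤ), (3*α (i+1) + α i)/2 * w (i+1) * (d i)^2 := by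
    have hGper : ∀ j:ℤ, (3*α (j+1+N) + α (j+N))/2 * w (j+1+N) * (d (j+N))^2
        = (3*α (j+1) + α j)/2 * w (j+1) * (d j)^2 := by
      intro j
      simp only [hαdef, hwdef]
      rw [show j+1+(N:ℤ) = j+N+1 by ring, hu1, hper, hdper]
    have := sum_shift (fun i => (3*α (i-1+1) + α (i-1))/2 * w (i-1+1) * (d (i-1))^2) N hN
      (by
        intro i
        rw [show i+(N:ℤ)-1 = (i-1)+N by ring, show (i-1)+(N:ℤ)+1 = (i-1)+1+N by ring]
        exact hGper (i-1))
    simp only [show ∀ i:ℤ, i - 1 + 1 = i from fun i => by ring,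
      show ∀ i:ℤ, i + 1 - 1 = i from fun i => by ring] at this
    exact this.symm
  -- shift for P d^2
  have hPshift : ∑ i ∈ Icc (1:ℤ) (N:ℤ),
      ((3*u (i-1)^(n-3) + u i^(n-3))/2 * u (i-1)^(-p-1)
        + (3*u i^(n-3) + u (i-1)^(n-3))/2 * u i^(-p-1)) * (d (i-1))^2
      = ∑ i ∈ Icc (1:ℤ) (N:ℤ), Pf n p u i * (d i)^2 := by
    have hKper : ∀ j:ℤ, Pf n p u (j+N) * (d (j+N))^2 = Pf n p u j * (d j)^2 := by
      intro j
      unfold Pf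
      rw [show j+(N:ℤ)+1 = j+1+N by ring, show j+1+(N:ℤ) = j+N+1 by ring, hu1, hper, hdper]
    have := sum_shift (fun i => Pf n p u (i-1) * (d (i-1))^2) N hN
      (by
        intro i
        rw [show i+(N:ℤ)-1 = (i-1)+N by ring]
        exact hKper (i-1))
    simp only [show ∀ i:ℤ, i + 1 - 1 = i from fun i => by ring] at this
    have hPfm : ∀ i:ℤ, Pf n p u (i-1)
        = (3*u (i-1)^(n-3) + u i^(n-3))/2 * u (i-1)^(-p-1)
          + (3*u i^(n-3) + u (i-1)^(n-3))/2 * u i^(-p-1) := by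
      intro i
      unfold Pf
      rw [show i-1+1 = i by ring]
    calc ∑ i ∈ Icc (1:ℤ) (N:ℤ),
        ((3*u (i-1)^(n-3) + u i^(n-3))/2 * u (i-1)^(-p-1)
          + (3*u i^(n-3) + u (i-1)^(n-3))/2 * u i^(-p-1)) * (d (i-1))^2
        = ∑ i ∈ Icc (1:ℤ) (N:ℤ), Pf n p u (i-1) * (d (i-1))^2 :=
          Finset.sum_congr rfl (fun i _ => by rw [hPfm i])
      _ = ∑ i ∈ Icc (1:ℤ) (N:ℤ), Pf n p u i * (d i)^2 := this.symm
  -- positivity of Pf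
  have hPfpos : ∀ i:ℤ, 0 < Pf n p u i := by
    intro i
    unfold Pf
    have := hpos i; have := hpos (i+1)
    positivity
  have hPfmpos : ∀ i:ℤ, (0:ℝ) < (3*u (i-1)^(n-3) + u i^(n-3))/2 * u (i-1)^(-p-1)
      + (3*u i^(n-3) + u (i-1)^(n-3))/2 * u i^(-p-1) := by
    intro i
    have := hpos i; have := hpos (i-1)
    positivity
  -- pointwise cross-term bound
  have hcross_pt : ∀ i ∈ Icc (1:ℤ) (N:ℤ),
      -(θ * (Pf n p u i * (d i)^2
        + ((3*u (i-1)^(n-3) + u i^(n-3))/2 * u (i-1)^(-p-1)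
          + (3*u i^(n-3) + u (i-1)^(n-3))/2 * u i^(-p-1)) * (d (i-1))^2))
      ≤ cxf n p u i * (d i * d (i-1)) := by
    intro i _
    apply cross θ _ _ _ (d i) (d (i-1)) hθ0 (hPfpos i) (hPfmpos i)
    · unfold cxf
      have := hpos i; have := hpos (i+1); have := hpos (i-1)
      positivity
    · have h21 : u (i+1) ≤ Cosc * u i := by
        have := (hosc (i+1)).2
        rwa [show i+1-1 = i by ring] at this
      have h01 : u (i-1) ≤ Cosc * u i := by
        have := (hosc (i-1)).1
        rwa [show i-1+1 = i by ring] at this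
      have hk := key n p Cosc hn2 hn3 hp hCosc (u (i-1)) (u i) (u (i+1))
        (hpos (i-1)) (hpos i) (hpos (i+1)) (hosc i).2 h01 (hosc i).1 h21
      unfold cxf Pf
      rw [← hθdef] at hk
      exact hk
  -- combine sums
  set S1 : ℝ := ∑ i ∈ Icc (1:ℤ) (N:ℤ), Pf n p u i * (d i)^2 with hS1def
  set St : ℝ := ∑ i ∈ Icc (1:ℤ) (N:ℤ), u i ^ (n - p - 4) * (d i)^2 with hStdef
  have hT : (∑ i ∈ Icc (1:ℤ) (N:ℤ),
        ((3*α i + α (i+1))/2 * w i * (d i)^2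
          + (3*α i + α (i-1))/2 * w i * (d (i-1))^2
          + cxf n p u i * (d i * d (i-1))))
      = S1 + ∑ i ∈ Icc (1:ℤ) (N:ℤ), cxf n p u i * (d i * d (i-1)) := by
    rw [Finset.sum_add_distrib]
    congr 1
    rw [Finset.sum_add_distrib, hbshift, ← Finset.sum_add_distrib, hS1def]
    refine Finset.sum_congr rfl (fun i _ => ?_)
    simp only [Pf, hαdef, hwdef]
    ring
  have hcrossS : -(θ * (S1 + S1)) ≤ ∑ i ∈ Icc (1:ℤ) (N:ℤ), cxf n p u i * (d i * d (i-1)) := by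
    have h1 := Finset.sum_le_sum hcross_pt
    have h2 : ∑ i ∈ Icc (1:ℤ) (N:ℤ),
        -(θ * (Pf n p u i * (d i)^2
          + ((3*u (i-1)^(n-3) + u i^(n-3))/2 * u (i-1)^(-p-1)
            + (3*u i^(n-3) + u (i-1)^(n-3))/2 * u i^(-p-1)) * (d (i-1))^2))
        = -(θ * (S1 + S1)) := by
      rw [Finset.sum_neg_distrib, ← Finset.mul_sum, Finset.sum_add_distrib, hPshift, ← hS1def]
    rw [h2] at h1
    exact h1
  have hlow : (3/2) * St ≤ S1 := by
    rw [hStdef, Finset.mul_sum, hS1def]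
    refine Finset.sum_le_sum (fun i _ => ?_)
    have hexp : u i ^ (n-p-4) = u i^(n-3) * u i^(-p-1) := by
      rw [← Real.rpow_add (hpos i)]
      congr 1
      ring
    have hPlow : (3/2) * u i ^ (n-p-4) ≤ Pf n p u i := by
      rw [hexp]
      unfold Pf
      have h1 : (0:ℝ) < u (i+1)^(n-3) := Real.rpow_pos_of_pos (hpos (i+1)) _
      have h2 : (0:ℝ) < u (i+1)^(-p-1) := Real.rpow_pos_of_pos (hpos (i+1)) _
      have h3 : (0:ℝ) < u i^(n-3) := Real.rpow_pos_of_pos (hpos i) _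
      have h4 : (0:ℝ) < u i^(-p-1) := Real.rpow_pos_of_pos (hpos i) _
      nlinarith [mul_pos h1 h4, mul_pos h1 h2, mul_pos h3 h2]
    calc (3/2) * (u i ^ (n-p-4) * (d i)^2) = ((3/2) * u i ^ (n-p-4)) * (d i)^2 := by ring
      _ ≤ Pf n p u i * (d i)^2 := mul_le_mul_of_nonneg_right hPlow (sq_nonneg _)
  -- final assembly
  rw [hA, hT]
  have hTlow : (1-2*θ) * ((3/2) * St) ≤ S1 + ∑ i ∈ Icc (1:ℤ) (N:ℤ), cxf n p u i * (d i * d (i-1)) := by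
    have k1 : (1-2*θ)*S1 ≤ S1 + ∑ i ∈ Icc (1:ℤ) (N:ℤ), cxf n p u i * (d i * d (i-1)) := by
      have := hcrossS
      linarith
    have k2 : (1-2*θ) * ((3/2) * St) ≤ (1-2*θ)*S1 :=
      mul_le_mul_of_nonneg_left hlow (by linarith)
    linarith
  have hc : (0:ℝ) < (n-2)/6*h := by
    have : (0:ℝ) < n - 2 := by linarith
    positivity
  calc (1 - 2 * θ) / 4 * (n - 2) * h * St
      = (n-2)/6*h * ((1-2*θ) * ((3/2) * St)) := by ring
    _ ≤ (n-2)/6*h * (S1 + ∑ i ∈ Icc (1:ℤ) (N:ℤ), cxf n p u i * (d i * d (i-1))) :=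
        mul_le_mul_of_nonneg_left hTlow hc.le
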